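/- For all i, k ∈ F_q and every g ∈ Y_k, the number of pairs (u,v) ∈ Y_i × Y_{−i} with uv = g equals: q if k ∉ {i, −i}; q − 1 if k ∈ {i, −i} and i ≠ 0; and q − 2 if k = i = 0. -/

import Mathlib

/-- The Heisenberg group `H₃(F)` of upper unitriangular 3×3 matrices over `F`,
recorded by the three free entries: `x` in position (1,2), `y` in position (2,3),
`z` in position (1,3). -/
@[ext]
structure Heis (F : Type*) where
  x : F
  y : F
  z : F
deriving DecidableEq

namespace Heis

variable {F : Type*} [Field F]

/-- Multiplication corresponding to the matrix product. -/
instance : Group (Heis F) where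
  mul a b := ⟨a.x + b.x, a.y + b.y, a.z + b.z + a.x * b.y⟩
  one := ⟨0, 0, 0⟩
  inv a := ⟨-a.x, -a.y, -a.z + a.x * a.y⟩
  mul_assoc a b c := Heis.ext
    (show a.x + b.x + c.x = a.x + (b.x + c.x) by ring)
    (show a.y + b.y + c.y = a.y + (b.y + c.y) by ring)
    (show a.z + b.z + a.x * b.y + c.z + (a.x + b.x) * c.y
        = a.z + (b.z + c.z + b.x * c.y) + a.x * (b.y + c.y) by ring)
  one_mul a := Heis.ext
    (show (0 : F) + a.x = a.x by ring)
    (show (0 : F) + a.y = a.y by ring)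
    (show (0 : F) + a.z + 0 * a.y = a.z by ring)
  mul_one a := Heis.ext
    (show a.x + 0 = a.x by ring)
    (show a.y + 0 = a.y by ring)
    (show a.z + 0 + a.x * 0 = a.z by ring)
  inv_mul_cancel a := Heis.ext
    (show -a.x + a.x = 0 by ring)
    (show -a.y + a.y = 0 by ring)
    (show -a.z + a.x * a.y + a.z + -a.x * a.y = 0 by ring)

instance [Fintype F] : Fintype (Heis F) :=
  Fintype.ofEquiv (F × F × F)
    ⟨fun p => ⟨p.1, p.2.1, p.2.2⟩, fun a => (a.x, a.y, a.z), fun _ => rfl, fun _ => rfl⟩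

end Heis

/-- The element `g(x,y,z)` of the Heisenberg group. -/
def gElt {F : Type*} (x y z : F) : Heis F := ⟨x, y, z⟩

/-- The center `Z = {g(0,0,z) : z ∈ F}` of the Heisenberg group, as a set. -/
def Zset (F : Type*) [Field F] : Set (Heis F) := {g : Heis F | g.x = 0 ∧ g.y = 0}

/-- The center `Z` as a subgroup of the Heisenberg group. -/
def Zsub (F : Type*) [Field F] : Subgroup (Heis F) where
  carrier := Zset F
  mul_mem' := fun {a b} ha hb =>
    ⟨show a.x + b.x = 0 by rw [ha.1, hb.1, add_zero],
     show a.y + b.y = 0 by rw [ha.2, hb.2, add_zero]⟩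
  one_mem' := ⟨rfl, rfl⟩
  inv_mem' := fun {a} ha =>
    ⟨show -a.x = 0 by rw [ha.1, neg_zero],
     show -a.y = 0 by rw [ha.2, neg_zero]⟩

/-- `γ_i(α,β) = αβ/2 + (α² − εβ²)i`. -/
def gam {F : Type*} [Field F] (ε i α β : F) : F := α * β / 2 + (α ^ 2 - ε * β ^ 2) * i

/-- `Y_i = {g(α, β, γ_i(α,β)) : (α,β) ≠ (0,0)}`. -/
def Yset {F : Type*} [Field F] (ε i : F) : Set (Heis F) :=
  {g : Heis F | ∃ α β : F, (α, β) ≠ (0, 0) ∧ g = gElt α β (gam ε i α β)}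

/-- `X_i = Y_i ∪ {e}`. -/
def Xset {F : Type*} [Field F] (ε i : F) : Set (Heis F) := Yset ε i ∪ {1}

/-- The map `ρ(M) : G → G` attached to the matrix `M = [[α,β],[εβ,α]]`. -/
def rho {F : Type*} [Field F] (ε α β : F) : Heis F → Heis F := fun g =>
  gElt (α * g.x + ε * β * g.y) (β * g.x + α * g.y)
    (α * β * (g.x ^ 2 / 2 + ε * g.y ^ 2 / 2) + ε * β ^ 2 * g.x * g.y
      + (α ^ 2 - ε * β ^ 2) * g.z)

/-- `K = {ρ(M) : M = [[α,β],[εβ,α]], (α,β) ≠ (0,0)}`, as a set of maps `G → G`. -/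
def Kset {F : Type*} [Field F] (ε : F) : Set (Heis F → Heis F) :=
  {f | ∃ α β : F, (α, β) ≠ (0, 0) ∧ f = rho ε α β}

/-- The family of sets `{e}`, `Z \ {e}`, `Y_i` for `i ∈ F`. -/
def SFam {F : Type*} [Field F] (ε : F) : Set (Set (Heis F)) :=
  insert {1} (insert (Zset F \ {1}) {S | ∃ i : F, S = Yset ε i})

/-- `f` preserves each of the basic sets `{e}`, `Z \ {e}`, `Y_i`:
`hg⁻¹ ∈ S ↔ f(h)f(g)⁻¹ ∈ S`. -/
def Preserves {F : Type*} [Field F] (ε : F) (f : Heis F → Heis F) : Prop :=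
  ∀ S ∈ SFam ε, ∀ g h : Heis F, h * g⁻¹ ∈ S ↔ f h * (f g)⁻¹ ∈ S

/-- The set of permutations of `G` of the form `x ↦ σ(x)·c` with `σ ∈ K`, `c ∈ G`. -/
def Aset {F : Type*} [Field F] (ε : F) : Set (Equiv.Perm (Heis F)) :=
  {f | ∃ σ ∈ Kset ε, ∃ c : Heis F, ∀ x : Heis F, f x = σ x * c}

/-- The operation `ψ` on `F ∪ {∞}`, with `∞` encoded as `none`. -/
def psi {F : Type*} [Field F] [DecidableEq F] (ε : F) : Option F → Option F → Option F
  | none, j => j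
  | some i, none => some i
  | some i, some j => if i + j = 0 then none else some ((i * j + ε / 16) / (i + j))

/-- `Y_k` for `k ∈ F ∪ {∞}`, where `Y_∞ = Z \ {e}`. -/
def YInf {F : Type*} [Field F] (ε : F) : Option F → Set (Heis F)
  | some i => Yset ε i
  | none => Zset F \ {1}


/-! Write `u = g(a, b, γ_i(a,b))`; then `v = u⁻¹g` is forced, and `v ∈ Y_{-i}` says that
`(a,b) ≠ (α,β)` and that `(a,b)` satisfies an equation which is linear because the quadratic
parts of `γ_i` and `γ_{-i}` cancel. As `ε` is a nonsquare, this equation defines a genuine line in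
`F²`, with `q` points. It passes through `(0,0)` iff `k = -i` and through `(α,β)` iff `k = i`,
and these two points have to be removed. -/

open Function Set

theorem Nat.card_mul_eq_ncard_inter_preimage {G : Type*} [Group G] (S T : Set G) (g : G) :
    Nat.card {p : G × G // p.1 ∈ S ∧ p.2 ∈ T ∧ p.1 * p.2 = g}
      = (S ∩ (· ⁻¹ * g) ⁻¹' T).ncard :=
  Nat.card_congr
    { toFun p := ⟨p.1.1, p.2.1, by
        obtain ⟨⟨u, v⟩, -, hv, rfl⟩ := p
        simpa using hv⟩
      invFun u := ⟨(u.1, u.1⁻¹ * g), u.2.1, u.2.2, mul_inv_cancel_left _ _⟩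
      left_inv := by rintro ⟨⟨u, v⟩, hu, hv, rfl⟩; simp
      right_inv _ := rfl }

theorem Set.ncard_sdiff_singleton_eq_ite {α : Type*} (s : Set α) (a : α) [Decidable (a ∈ s)] :
    (s \ {a}).ncard = if a ∈ s then s.ncard - 1 else s.ncard := by
  split_ifs with h
  · exact ncard_sdiff_singleton_of_mem h
  · rw [sdiff_singleton_eq_self h]

section Field

variable {F : Type*} [Field F]

theorem mul_sq_ne_one_of_not_isSquare {ε : F} (hε : ¬IsSquare ε) (t : F) : ε * t ^ 2 ≠ 1 := by
  intro h
  have ht : t ≠ 0 := by rintro rfl; simp at h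
  exact hε ⟨t⁻¹, by field_simp; linear_combination h⟩

theorem sq_sub_mul_sq_ne_zero {ε : F} (hε : ¬IsSquare ε) {α β : F} (h : (α, β) ≠ (0, 0)) :
    α ^ 2 - ε * β ^ 2 ≠ 0 := by
  intro hN
  by_cases hα : α = 0
  · have hβ : β = 0 := by
      subst hα
      have hε0 : ε ≠ 0 := by rintro rfl; exact hε IsSquare.zero
      simpa [hε0] using hN
    exact h (by rw [hα, hβ])
  · exact mul_sq_ne_one_of_not_isSquare hε (β / α) (by field_simp; linear_combination -hN)

theorem ncard_setOf_linear_eq_of_right_ne_zero {A B : F} (hB : B ≠ 0) (c : F) :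
    {p : F × F | A * p.1 + B * p.2 = c}.ncard = Nat.card F := by
  have hgraph : {p : F × F | A * p.1 + B * p.2 = c} = range fun t => (t, (c - A * t) / B) := by
    ext ⟨a, b⟩
    simp only [mem_ofPred_eq, mem_range, Prod.mk.injEq, exists_eq_left]
    constructor <;> intro h
    · field_simp; linear_combination -h
    · rw [← h]; field_simp; ring
  rw [hgraph, ncard_range_of_injective fun s t h => congr_arg Prod.fst h]

theorem ncard_setOf_linear_eq {A B : F} (h : (A, B) ≠ (0, 0)) (c : F) :
    {p : F × F | A * p.1 + B * p.2 = c}.ncard = Nat.card F := by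
  by_cases hB : B = 0
  · have hA : A ≠ 0 := fun hA => h (by rw [hA, hB])
    have hswap :
        {p : F × F | A * p.1 + B * p.2 = c} = Prod.swap '' {p | B * p.1 + A * p.2 = c} := by
      rw [image_swap_eq_preimage_swap]
      ext
      simp [add_comm]
    rw [hswap, ncard_image_of_injective _ Prod.swap_injective,
      ncard_setOf_linear_eq_of_right_ne_zero hA]
  · exact ncard_setOf_linear_eq_of_right_ne_zero hB c

end Field

namespace Heis

variable {F : Type*} [Field F]

theorem mul_def (a b : Heis F) : a * b = ⟨a.x + b.x, a.y + b.y, a.z + b.z + a.x * b.y⟩ := rfl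

theorem inv_def (a : Heis F) : a⁻¹ = ⟨-a.x, -a.y, -a.z + a.x * a.y⟩ := rfl

end Heis

section Yset

variable {F : Type*} [Field F]

def yPoint (ε i : F) (p : F × F) : Heis F := gElt p.1 p.2 (gam ε i p.1 p.2)

theorem yPoint_injective (ε i : F) : Injective (yPoint ε i) :=
  fun _ _ h => Prod.ext (congr_arg Heis.x h) (congr_arg Heis.y h)

theorem Yset_eq_image (ε i : F) : Yset ε i = yPoint ε i '' {p | p ≠ (0, 0)} := by
  ext g
  simp only [Yset, yPoint, mem_image, mem_ofPred_eq, Prod.exists, eq_comm (a := g)]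

theorem mem_Yset_iff {ε i : F} {g : Heis F} :
    g ∈ Yset ε i ↔ (g.x, g.y) ≠ (0, 0) ∧ g.z = gam ε i g.x g.y := by
  constructor
  · rintro ⟨a, b, hab, rfl⟩
    exact ⟨hab, rfl⟩
  · rintro ⟨hxy, hz⟩
    exact ⟨g.x, g.y, hxy, Heis.ext rfl rfl hz⟩

/-- After doubling, this is the equation `γ_i(a,b) + γ_{-i}(α-a, β-b) + a(β-b) = γ_k(α,β)` on
`p = (a,b)`; its quadratic terms cancel. -/
def chordLine (ε i k α β : F) : Set (F × F) :=
  {p | (β + 4 * i * α) * p.1 + -(α + 4 * i * ε * β) * p.2 = 2 * (α ^ 2 - ε * β ^ 2) * (k + i)}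

theorem inv_yPoint_mul_yPoint_mem_Yset_neg_iff (h2 : (2 : F) ≠ 0) (ε i k α β : F) (p : F × F) :
    (yPoint ε i p)⁻¹ * yPoint ε k (α, β) ∈ Yset ε (-i) ↔ p ≠ (α, β) ∧ p ∈ chordLine ε i k α β := by
  obtain ⟨a, b⟩ := p
  rw [mem_Yset_iff]
  refine and_congr ?_ ?_
  · simp only [yPoint, gElt, Heis.mul_def, Heis.inv_def, ne_eq, Prod.mk.injEq, neg_add_eq_zero]
  · show _ = gam ε (-i) (-a + α) (-b + β) ↔ _
    simp only [yPoint, gElt, gam, Heis.mul_def, Heis.inv_def, chordLine, mem_ofPred_eq]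
    constructor <;> intro h
    · field_simp at h
      linear_combination -h
    · field_simp
      linear_combination -h

theorem zero_mem_chordLine_iff (h2 : (2 : F) ≠ 0) {ε α β : F} (hN : α ^ 2 - ε * β ^ 2 ≠ 0)
    (i k : F) : (0, 0) ∈ chordLine ε i k α β ↔ k = -i := by
  simp [chordLine, h2, hN, eq_comm (a := (0 : F)), add_eq_zero_iff_eq_neg]

theorem self_mem_chordLine_iff (h2 : (2 : F) ≠ 0) {ε α β : F} (hN : α ^ 2 - ε * β ^ 2 ≠ 0)
    (i k : F) : (α, β) ∈ chordLine ε i k α β ↔ k = i := by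
  have hval : (β + 4 * i * α) * α + -(α + 4 * i * ε * β) * β
      = 2 * (α ^ 2 - ε * β ^ 2) * (i + i) := by ring
  simp only [chordLine, mem_ofPred_eq, hval, mul_right_inj' (mul_ne_zero h2 hN), add_left_inj]
  exact eq_comm

theorem ncard_chordLine {ε : F} (hε : ¬IsSquare ε) {α β : F} (h : (α, β) ≠ (0, 0)) (i k : F) :
    (chordLine ε i k α β).ncard = Nat.card F := by
  refine ncard_setOf_linear_eq (fun hAB => h ?_) _
  simp only [Prod.mk.injEq, neg_eq_zero] at hAB ⊢
  obtain ⟨hA, hB⟩ := hAB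
  have hα : α * (1 - ε * (4 * i) ^ 2) = 0 := by linear_combination hB - 4 * i * ε * hA
  have hα0 : α = 0 :=
    (mul_eq_zero.mp hα).resolve_right (sub_ne_zero.mpr (mul_sq_ne_one_of_not_isSquare hε _).symm)
  exact ⟨hα0, by simpa [hα0] using hA⟩

theorem card_Yset_mul_Yset_neg [DecidableEq F] [Finite F] (h2 : (2 : F) ≠ 0) {ε : F}
    (hε : ¬IsSquare ε) (i k : F) {g : Heis F} (hg : g ∈ Yset ε k) :
    Nat.card {p : Heis F × Heis F // p.1 ∈ Yset ε i ∧ p.2 ∈ Yset ε (-i) ∧ p.1 * p.2 = g}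
      = Nat.card F - (if k = -i then 1 else 0) - (if k = i then 1 else 0) := by
  classical
  rw [Yset_eq_image] at hg
  obtain ⟨⟨α, β⟩, hne : (α, β) ≠ (0, 0), rfl⟩ := hg
  have hN := sq_sub_mul_sq_ne_zero hε hne
  have hsolutions :
      {p | p ≠ (0, 0)} ∩ yPoint ε i ⁻¹' ((· ⁻¹ * yPoint ε k (α, β)) ⁻¹' Yset ε (-i))
        = (chordLine ε i k α β \ {(0, 0)}) \ {(α, β)} := by
    ext p
    simp only [mem_inter_iff, mem_preimage, mem_ofPred_eq,
      inv_yPoint_mul_yPoint_mem_Yset_neg_iff h2, mem_sdiff, mem_singleton_iff]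
    tauto
  rw [Nat.card_mul_eq_ncard_inter_preimage, Yset_eq_image, ← image_inter_preimage,
    ncard_image_of_injective _ (yPoint_injective ε i), hsolutions]
  simp only [ncard_sdiff_singleton_eq_ite, mem_sdiff, mem_singleton_iff, hne,
    zero_mem_chordLine_iff h2 hN, self_mem_chordLine_iff h2 hN, ncard_chordLine hε hne,
    not_false_eq_true, and_true]
  split_ifs <;> omega

end Yset

/-- For all `i, k ∈ F_q` and every `g ∈ Y_k`, the number of pairs
`(u,v) ∈ Y_i × Y_{−i}` with `uv = g` equals `q` if `k ∉ {i, −i}`, equals `q − 1` if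
`k ∈ {i, −i}` and `i ≠ 0`, and equals `q − 2` if `k = i = 0`. -/
theorem statement_6 {F : Type*} [Field F] [Fintype F]
    (hodd : Odd (Fintype.card F)) (ε : F) (hε : ¬IsSquare ε)
    (i k : F) (g : Heis F) (hg : g ∈ Yset ε k) :
    (k ≠ i ∧ k ≠ -i →
      Nat.card {p : Heis F × Heis F // p.1 ∈ Yset ε i ∧ p.2 ∈ Yset ε (-i) ∧ p.1 * p.2 = g}
        = Fintype.card F) ∧
    ((k = i ∨ k = -i) → i ≠ 0 →
      Nat.card {p : Heis F × Heis F // p.1 ∈ Yset ε i ∧ p.2 ∈ Yset ε (-i) ∧ p.1 * p.2 = g}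
        = Fintype.card F - 1) ∧
    (k = 0 → i = 0 →
      Nat.card {p : Heis F × Heis F // p.1 ∈ Yset ε i ∧ p.2 ∈ Yset ε (-i) ∧ p.1 * p.2 = g}
        = Fintype.card F - 2) := by
  classical
  have hchar : ringChar F ≠ 2 := fun h => by
    have := FiniteField.even_card_iff_char_two.mp h
    rw [Nat.odd_iff] at hodd
    omega
  have hcount := card_Yset_mul_Yset_neg (Ring.two_ne_zero hchar) hε i k hg
  rw [Nat.card_eq_fintype_card (α := F)] at hcount
  have hneg_ne_self : i ≠ 0 → -i ≠ i := mt (Ring.eq_self_iff_eq_zero_of_char_ne_two hchar).mp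
  refine ⟨fun ⟨hki, hkn⟩ => by rw [hcount, if_neg hkn, if_neg hki]; rfl, ?_, ?_⟩
  · rintro (rfl | rfl) hi <;> rw [hcount]
    · simp [(hneg_ne_self hi).symm]
    · simp [hneg_ne_self hi]
  · rintro rfl rfl
    rw [hcount, neg_zero, if_pos rfl]
    omega
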